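/- Let Ω ⊆ ℝ³ be open and let Φ : Ω → ℝ be C³ with positive definite Hessian at every point. Write Φ_{ijk} for the third partial derivatives and Φ^{pq} for the entries of the inverse Hessian matrix. Then Φ satisfies the WDVV equations — i.e. Σ_{p,q} Φ^{pq} Φ_{jlp} Φ_{ikq} = Σ_{p,q} Φ^{pq} Φ_{ilp} Φ_{jkq} for all indices i,j,k,l ∈ {1,2,3} at every point of Ω — if and only if Φ satisfies the six equations (indexed by pairs i ≤ k in {1,2,3}) Σ_{j,l,p,q} Φ^{jl} Φ^{pq} Φ_{jlp} Φ_{ikq} = Σ_{j,l,p,q} Φ^{jl} Φ^{pq} Φ_{ilp} Φ_{jkq} at every point of Ω. -/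

import Mathlib

open Real Matrix

/-- Partial derivative of `f : ℝⁿ → ℝ` in the `i`-th coordinate direction. -/
noncomputable def pd {n : ℕ} (i : Fin n) (f : (Fin n → ℝ) → ℝ) : (Fin n → ℝ) → ℝ :=
  fun x => fderiv ℝ f x (Pi.single i 1)

/-- Hessian matrix of second partial derivatives of `f : ℝⁿ → ℝ`. -/
noncomputable def hessian {n : ℕ} (f : (Fin n → ℝ) → ℝ) (x : Fin n → ℝ) :
    Matrix (Fin n) (Fin n) ℝ :=
  Matrix.of fun i j => pd i (pd j f) x

/-- Third partial derivatives `Φ_{ijk}` of `f : ℝⁿ → ℝ`. -/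
noncomputable def pd3 {n : ℕ} (f : (Fin n → ℝ) → ℝ) (i j k : Fin n) (x : Fin n → ℝ) : ℝ :=
  pd i (pd j (pd k f)) x

/-!
The WDVV equations say that `hessCurvature a c` vanishes for `a = (Hess Φ)⁻¹` and `c = Φ_{ijk}`,
and the six contracted equations say that its Ricci contraction with `a` vanishes. In dimension
three a tensor `R` antisymmetric in each index pair is determined by its matrix `S` on bivectors
`Λ² ≅ K³`, and its Ricci contraction with `a` is, up to transposition, the polarized adjugate
`adj (a + S) - adj a - adj S`. If that vanishes, polarizing `adj X * X = det X • 1` gives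
`adj a * S = tr (adj a * S) • 1`; taking traces forces `tr (adj a * S) = 0`, hence `adj a * S = 0`
and `S = 0` because `a` is invertible.
-/

section PartialDerivatives

variable {n : ℕ} {f : (Fin n → ℝ) → ℝ} {x : Fin n → ℝ}

theorem ContDiffAt.pd {m : ℕ} (hf : ContDiffAt ℝ (m + 1) f x) (i : Fin n) :
    ContDiffAt ℝ m (pd i f) x :=
  (hf.fderiv_right le_rfl).clm_apply contDiffAt_const

theorem pd_pd_eq_fderiv_fderiv (hf : ContDiffAt ℝ 2 f x) (i j : Fin n) :
    pd i (pd j f) x = fderiv ℝ (fderiv ℝ f) x (Pi.single i 1) (Pi.single j 1) := by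
  have hdiff : DifferentiableAt ℝ (fderiv ℝ f) x :=
    (hf.fderiv_right (m := 1) (by norm_num)).differentiableAt one_ne_zero
  have hderiv := hdiff.hasFDerivAt.clm_apply (hasFDerivAt_const (Pi.single j (1 : ℝ)) x)
  unfold pd
  rw [hderiv.fderiv]
  simp only [ContinuousLinearMap.comp_zero, zero_add, ContinuousLinearMap.flip_apply]

theorem pd_comm (hf : ContDiffAt ℝ 2 f x) (i j : Fin n) : pd i (pd j f) x = pd j (pd i f) x := by
  rw [pd_pd_eq_fderiv_fderiv hf, pd_pd_eq_fderiv_fderiv hf]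
  exact hf.isSymmSndFDerivAt (by simp [minSmoothness_of_isRCLikeNormedField]) _ _

theorem pd3_comm (hf : ContDiffAt ℝ 3 f x) (i j k : Fin n) : pd3 f j i k x = pd3 f i j k x :=
  pd_comm (hf.pd (m := 2) k) j i

end PartialDerivatives

section Ricci

variable {n K : Type*} [Fintype n] [CommRing K]

def ricci (a : Matrix n n K) (R : n → n → n → n → K) : Matrix n n K :=
  of fun i k => ∑ j, ∑ l, a j l * R i j k l

theorem ricci_isSymm {a : Matrix n n K} {R : n → n → n → n → K} (ha : a.IsSymm)
    (hR : ∀ i j k l, R k l i j = R i j k l) : (ricci a R).IsSymm := by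
  ext i k
  simp only [transpose_apply, ricci, of_apply, hR k]
  rw [Finset.sum_comm]
  simp only [ha.apply]

end Ricci

section HessianCurvature

variable {n K : Type*} [Fintype n] [CommRing K] {a : Matrix n n K} {c : n → n → n → K}

def cubicPairing (a : Matrix n n K) (c : n → n → n → K) (i j k l : n) : K :=
  ∑ p, ∑ q, a p q * c j l p * c i k q

/-- For `a = (Hess Φ)⁻¹` and `c = Φ_{ijk}`, a constant multiple of the Riemann tensor of the
Hessian metric. -/
def hessCurvature (a : Matrix n n K) (c : n → n → n → K) (i j k l : n) : K :=
  cubicPairing a c i j k l - cubicPairing a c j i k l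

theorem cubicPairing_swap_right (ha : a.IsSymm) (i j k l : n) :
    cubicPairing a c i j l k = cubicPairing a c j i k l := by
  unfold cubicPairing
  rw [Finset.sum_comm]
  refine Finset.sum_congr rfl fun p _ => Finset.sum_congr rfl fun q _ => ?_
  rw [ha.apply]
  ring

theorem cubicPairing_swap_pairs (hc : ∀ i j k, c j i k = c i j k) (i j k l : n) :
    cubicPairing a c k l i j = cubicPairing a c i j k l := by
  simp only [cubicPairing, hc l j, hc k i]

theorem hessCurvature_swap_left (i j k l : n) :
    hessCurvature a c j i k l = -hessCurvature a c i j k l :=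
  (neg_sub _ _).symm

theorem hessCurvature_swap_right (ha : a.IsSymm) (i j k l : n) :
    hessCurvature a c i j l k = -hessCurvature a c i j k l := by
  simp only [hessCurvature, cubicPairing_swap_right ha, neg_sub]

theorem hessCurvature_swap_pairs (ha : a.IsSymm) (hc : ∀ i j k, c j i k = c i j k) (i j k l : n) :
    hessCurvature a c k l i j = hessCurvature a c i j k l := by
  simp only [hessCurvature, cubicPairing_swap_pairs hc, cubicPairing_swap_right ha]

theorem ricci_hessCurvature_apply (i k : n) :
    ricci a (hessCurvature a c) i k =
      (∑ j, ∑ l, ∑ p, ∑ q, a j l * a p q * c j l p * c i k q) -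
        ∑ j, ∑ l, ∑ p, ∑ q, a j l * a p q * c i l p * c j k q := by
  simp only [ricci, hessCurvature, cubicPairing, of_apply, mul_sub, Finset.sum_sub_distrib,
    Finset.mul_sum, mul_assoc]

end HessianCurvature

section MixedAdjugate

variable {K : Type*}

/-- In dimension three the adjugate is quadratic and this is its polarization. -/
def Matrix.mixedAdjugate [CommRing K] (a b : Matrix (Fin 3) (Fin 3) K) :
    Matrix (Fin 3) (Fin 3) K :=
  adjugate (a + b) - adjugate a - adjugate b

/-- The first-order term of `adjugate (a + t b) * (a + t b) = det (a + t b) • 1`. -/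
theorem Matrix.mixedAdjugate_mul_add_adjugate_mul [CommRing K] (a b : Matrix (Fin 3) (Fin 3) K) :
    mixedAdjugate a b * a + adjugate a * b = trace (adjugate a * b) • 1 := by
  ext i j
  simp only [mixedAdjugate, adjugate_fin_three, one_fin_three, add_apply, sub_apply, smul_apply,
    mul_apply, Fin.sum_univ_three, trace_fin_three]
  fin_cases i <;> fin_cases j <;>
    simp only [Fin.zero_eta, Fin.mk_one, Fin.reduceFinMk, of_apply, cons_val', cons_val_zero,
      cons_val_one, cons_val, cons_val_fin_one, smul_eq_mul] <;> ring

theorem Matrix.eq_zero_of_mixedAdjugate_eq_zero [Field K] [NeZero (2 : K)]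
    {a b : Matrix (Fin 3) (Fin 3) K} (ha : a.det ≠ 0) (h : mixedAdjugate a b = 0) : b = 0 := by
  have key := mixedAdjugate_mul_add_adjugate_mul a b
  rw [h, zero_mul, zero_add] at key
  have htrace : trace (adjugate a * b) = 0 := by
    have h3 := congrArg trace key
    rw [trace_smul, trace_one, Fintype.card_fin, smul_eq_mul] at h3
    have : (2 : K) * trace (adjugate a * b) = 0 := by linear_combination -h3
    exact (mul_eq_zero.mp this).resolve_left two_ne_zero
  rw [htrace, zero_smul] at key
  have : a.det • b = 0 := by
    rw [← one_mul b, ← smul_mul_assoc, ← mul_adjugate, mul_assoc, key, mul_zero]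
  exact (smul_eq_zero.mp this).resolve_left ha

end MixedAdjugate

section Dimension3

variable {K : Type*} [Field K] [CharZero K]

/-- The matrix of `R` on bivectors, with `Λ² K³ ≅ K³` via `e_{m+1} ∧ e_{m+2} ↦ e_m`. -/
def bivectorMatrix (R : Fin 3 → Fin 3 → Fin 3 → Fin 3 → K) : Matrix (Fin 3) (Fin 3) K :=
  of fun m n => R (m + 1) (m + 2) (n + 1) (n + 2)

theorem eq_zero_of_antisymm_of_cyclic {ω : Fin 3 → Fin 3 → K} (hω : ∀ i j, ω j i = -ω i j)
    (h : ∀ m, ω (m + 1) (m + 2) = 0) (i j : Fin 3) : ω i j = 0 := by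
  fin_cases i <;> fin_cases j
  all_goals first
    | exact self_eq_neg.mp (hω _ _)
    | exact h 0 | exact h 1 | exact h 2
    | (rw [hω, neg_eq_zero]; first | exact h 0 | exact h 1 | exact h 2)

variable {R : Fin 3 → Fin 3 → Fin 3 → Fin 3 → K}
  (h₁ : ∀ i j k l, R j i k l = -R i j k l) (h₂ : ∀ i j k l, R i j l k = -R i j k l)
include h₁ h₂

theorem eq_zero_of_bivectorMatrix_eq_zero (h : bivectorMatrix R = 0) : R = 0 := by
  have hR : ∀ i j n, R i j (n + 1) (n + 2) = 0 := fun i j n =>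
    eq_zero_of_antisymm_of_cyclic (fun i j => h₁ i j _ _) (fun m => congrFun (congrFun h m) n) i j
  funext i j k l
  exact eq_zero_of_antisymm_of_cyclic (h₂ i j) (hR i j) k l

theorem ricci_eq_transpose_mixedAdjugate (a : Matrix (Fin 3) (Fin 3) K) :
    ricci a R = (mixedAdjugate a (bivectorMatrix R))ᵀ := by
  have d₁ : ∀ i k l, R i i k l = 0 := fun i k l => self_eq_neg.mp (h₁ i i k l)
  have d₂ : ∀ i j k, R i j k k = 0 := fun i j k => self_eq_neg.mp (h₂ i j k k)
  ext i k
  simp only [ricci, bivectorMatrix, mixedAdjugate, adjugate_fin_three, of_apply, transpose_apply,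
    Matrix.add_apply, Matrix.sub_apply, Fin.sum_univ_three]
  fin_cases i <;> fin_cases k <;>
    simp only [Fin.zero_eta, Fin.mk_one, Fin.reduceFinMk, Fin.reduceAdd, cons_val', cons_val_zero,
      cons_val_one, cons_val, cons_val_fin_one, d₁, d₂, h₁ 0 1, h₁ 1 2, h₁ 2 0,
      fun i j => h₂ i j 0 1, fun i j => h₂ i j 1 2, fun i j => h₂ i j 2 0] <;> ring

theorem eq_zero_of_ricci_eq_zero {a : Matrix (Fin 3) (Fin 3) K} (ha : a.det ≠ 0)
    (hric : ricci a R = 0) : R = 0 := by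
  refine eq_zero_of_bivectorMatrix_eq_zero h₁ h₂ (eq_zero_of_mixedAdjugate_eq_zero ha ?_)
  rw [← transpose_eq_zero, ← ricci_eq_transpose_mixedAdjugate h₁ h₂, hric]

end Dimension3

theorem hessCurvature_eq_zero_of_ricci {K : Type*} [Field K] [CharZero K]
    {a : Matrix (Fin 3) (Fin 3) K} {c : Fin 3 → Fin 3 → Fin 3 → K} (ha : a.IsSymm)
    (hdet : a.det ≠ 0) (hc : ∀ i j k, c j i k = c i j k)
    (hric : ∀ i k, i ≤ k → ricci a (hessCurvature a c) i k = 0) :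
    hessCurvature a c = 0 := by
  refine eq_zero_of_ricci_eq_zero hessCurvature_swap_left (hessCurvature_swap_right ha) hdet ?_
  have hsymm := ricci_isSymm ha (hessCurvature_swap_pairs ha hc)
  ext i k
  rcases le_total i k with hik | hki
  · exact hric i k hik
  · rw [← hsymm.apply]
    exact hric k i hki

/-- In dimension three, a convex potential satisfies the WDVV equations if and only if
it satisfies the six contracted (Ricci) equations indexed by pairs `i ≤ k`. -/
theorem wdvv_dim3_iff_ricci (Ω : Set (Fin 3 → ℝ)) (hΩ : IsOpen Ω)
    (Φ : (Fin 3 → ℝ) → ℝ) (hC3 : ContDiffOn ℝ 3 Φ Ω)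
    (hpos : ∀ x ∈ Ω, (hessian Φ x).PosDef) :
    (∀ x ∈ Ω, ∀ i j k l : Fin 3,
        ∑ p : Fin 3, ∑ q : Fin 3,
          (hessian Φ x)⁻¹ p q * pd3 Φ j l p x * pd3 Φ i k q x =
        ∑ p : Fin 3, ∑ q : Fin 3,
          (hessian Φ x)⁻¹ p q * pd3 Φ i l p x * pd3 Φ j k q x) ↔
    (∀ x ∈ Ω, ∀ i k : Fin 3, i ≤ k →
        ∑ j : Fin 3, ∑ l : Fin 3, ∑ p : Fin 3, ∑ q : Fin 3,
          (hessian Φ x)⁻¹ j l * (hessian Φ x)⁻¹ p q *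
            pd3 Φ j l p x * pd3 Φ i k q x =
        ∑ j : Fin 3, ∑ l : Fin 3, ∑ p : Fin 3, ∑ q : Fin 3,
          (hessian Φ x)⁻¹ j l * (hessian Φ x)⁻¹ p q *
            pd3 Φ i l p x * pd3 Φ j k q x) := by
  constructor
  · intro hW x hx i k _
    have hzero : hessCurvature (hessian Φ x)⁻¹ (fun i j k => pd3 Φ i j k x) = 0 := by
      funext i j k l
      exact sub_eq_zero.mpr (hW x hx i j k l)
    rw [← sub_eq_zero, ← ricci_hessCurvature_apply, hzero]
    simp [ricci]
  · intro hR x hx i j k l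
    have hH := (hpos x hx).inv
    have hsymm : ((hessian Φ x)⁻¹).IsSymm := by
      simpa [IsSymm, conjTranspose_eq_transpose_of_trivial] using hH.isHermitian
    have hc : ∀ i j k, pd3 Φ j i k x = pd3 Φ i j k x :=
      pd3_comm (hC3.contDiffAt (hΩ.mem_nhds hx))
    have hzero := hessCurvature_eq_zero_of_ricci hsymm hH.det_pos.ne' hc fun i k hik => by
      rw [ricci_hessCurvature_apply, sub_eq_zero]
      exact hR x hx i k hik
    exact sub_eq_zero.mp (congrFun (congrFun (congrFun (congrFun hzero i) j) k) l)
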